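/- Let g > 0, μ > 0, θ ∈ ℝ. The field A^a_0(x) = 0, A^a_i(x) = δ^a_i · μ g^{−1/2} · y(g^{1/2} μ x₀ + θ) for a, i ∈ {1,2,3} is an exact solution of the sourceless classical SU(2) Yang–Mills equations (the elliptic massive wave solving Yang–Mills theory in the infrared). -/

import Mathlib

open Real

/-- Partial derivative of `f : ℝ⁴ → ℝ` in the `μ`-th coordinate direction. -/
noncomputable def pd (i : Fin 4) (f : (Fin 4 → ℝ) → ℝ) (x : Fin 4 → ℝ) : ℝ :=
  deriv (fun t : ℝ => f (Function.update x i t)) (x i)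

/-- The Minkowski metric `η = diag(1, -1, -1, -1)` (diagonal entries). -/
noncomputable def eta (μ : Fin 4) : ℝ := if μ = 0 then 1 else -1

/-- The Levi-Civita symbol `ε^{abc}` on three indices (structure constants of SU(2)). -/
noncomputable def eps (a b c : Fin 3) : ℝ :=
  ((b.val : ℝ) - (a.val : ℝ)) * ((c.val : ℝ) - (a.val : ℝ)) * ((c.val : ℝ) - (b.val : ℝ)) / 2

/-- The sourceless classical SU(2) Yang–Mills equations in Minkowski space for a
field `A^a_ν : ℝ⁴ → ℝ` (color index `a : Fin 3`, Lorentz index `ν : Fin 4`):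
`∂^μ∂_μ A^a_ν - ∂_ν(∂^μ A^a_μ) + g ε^{abc} A^{bμ}(∂_μ A^c_ν - ∂_ν A^c_μ)
 + g ε^{abc} ∂^μ(A^b_μ A^c_ν) + g² ε^{abc} ε^{cde} A^{bμ} A^d_μ A^e_ν = 0`. -/
def IsYMSolution (g : ℝ) (A : Fin 3 → Fin 4 → (Fin 4 → ℝ) → ℝ) : Prop :=
  ∀ (a : Fin 3) (ν : Fin 4) (x : Fin 4 → ℝ),
    (∑ μ : Fin 4, eta μ * pd μ (pd μ (A a ν)) x)
      - pd ν (fun z => ∑ μ : Fin 4, eta μ * pd μ (A a μ) z) x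
      + g * ∑ b : Fin 3, ∑ c : Fin 3, ∑ μ : Fin 4,
          eps a b c * (eta μ * A b μ x) * (pd μ (A c ν) x - pd ν (A c μ) x)
      + g * ∑ b : Fin 3, ∑ c : Fin 3, ∑ μ : Fin 4,
          eps a b c * (eta μ * pd μ (fun z => A b μ z * A c ν z) x)
      + g ^ 2 * ∑ b : Fin 3, ∑ c : Fin 3, ∑ d : Fin 3, ∑ e : Fin 3, ∑ μ : Fin 4,
          eps a b c * eps c d e * (eta μ * A b μ x) * A d μ x * A e ν x
      = 0

/-!
For `A^a_0 = 0`, `A^a_i = δ^a_i f(x₀)` the field depends on time only and has no time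
component, so the divergence and `∂^μ(A^b_μ A^c_ν)` terms vanish, and the commutator term
vanishes because it only pairs `A^b` with `∂A^b` against `ε^{abb} = 0`. The contraction
`∑_{b,c} ε^{abc} ε^{cba} = -2` turns the cubic term into `2 g² f³ δ^a_i`, so the Yang–Mills
equations reduce to the single ODE `f'' = -2 g² f³`. The elliptic wave
`f(t) = c y(k t + θ)` with `c = μ g^{-1/2}`, `k = g^{1/2} μ` solves it because
`y'' = -2 y³` and `c k² = g² c³`.
-/

lemma pd_const (i : Fin 4) (c : ℝ) (x : Fin 4 → ℝ) : pd i (fun _ => c) x = 0 := by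
  simp only [pd, deriv_const]

lemma pd_zero (i : Fin 4) (x : Fin 4 → ℝ) : pd i 0 x = 0 :=
  pd_const i 0 x

lemma pd_comp_apply_self (j : Fin 4) (F : ℝ → ℝ) (x : Fin 4 → ℝ) :
    pd j (fun z => F (z j)) x = deriv F (x j) := by
  simp only [pd, Function.update_self]

lemma pd_comp_apply_of_ne {i j : Fin 4} (hij : i ≠ j) (F : ℝ → ℝ) (x : Fin 4 → ℝ) :
    pd i (fun z => F (z j)) x = 0 := by
  simp only [pd, Function.update_of_ne hij.symm, deriv_const]

lemma eps_self_right (a b : Fin 3) : eps a b b = 0 := by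
  simp [eps]

lemma sum_eps_mul_eps_swap (a e : Fin 3) :
    ∑ b : Fin 3, ∑ c : Fin 3, eps a b c * eps c b e = if a = e then -2 else 0 := by
  fin_cases a <;> fin_cases e <;> simp [Fin.sum_univ_three, eps] <;> norm_num

/-- `A^a_0 = 0`, `A^a_i = δ^a_i f(x₀)`. -/
def diagonalAnsatz (f : ℝ → ℝ) : Fin 3 → Fin 4 → (Fin 4 → ℝ) → ℝ :=
  fun a ν x => if ν = a.succ then f (x 0) else 0

namespace diagonalAnsatz

variable (f : ℝ → ℝ)

lemma time_eq_zero (a : Fin 3) : diagonalAnsatz f a 0 = 0 := by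
  funext x
  simp [diagonalAnsatz, (Fin.succ_ne_zero a).symm]

lemma pd_time (a : Fin 3) (ν : Fin 4) :
    pd 0 (diagonalAnsatz f a ν) = diagonalAnsatz (deriv f) a ν := by
  funext x
  unfold diagonalAnsatz
  split_ifs
  · exact pd_comp_apply_self 0 f x
  · exact pd_const 0 0 x

lemma pd_space {μ : Fin 4} (hμ : μ ≠ 0) (a : Fin 3) (ν : Fin 4) :
    pd μ (diagonalAnsatz f a ν) = 0 := by
  funext x
  exact pd_comp_apply_of_ne hμ (fun t => if ν = a.succ then f t else 0) x

lemma dalembertian (a : Fin 3) (ν : Fin 4) (x : Fin 4 → ℝ) :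
    ∑ μ : Fin 4, eta μ * pd μ (pd μ (diagonalAnsatz f a ν)) x =
      diagonalAnsatz (deriv (deriv f)) a ν x := by
  simp [Fin.sum_univ_succ, pd_time, pd_space, Fin.succ_ne_zero, eta, pd_zero]

lemma divergence_eq_zero (a : Fin 3) :
    (fun z => ∑ μ : Fin 4, eta μ * pd μ (diagonalAnsatz f a μ) z) = fun _ => 0 := by
  funext z
  simp [Fin.sum_univ_succ, time_eq_zero, pd_space, Fin.succ_ne_zero, pd_zero]

lemma pd_mul_eq_zero (b c : Fin 3) (μ ν : Fin 4) (x : Fin 4 → ℝ) :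
    pd μ (fun z => diagonalAnsatz f b μ z * diagonalAnsatz f c ν z) x = 0 := by
  by_cases hμ : μ = 0
  · subst hμ
    simpa [time_eq_zero] using pd_const 0 0 x
  · exact pd_comp_apply_of_ne hμ
      (fun t => (if μ = b.succ then f t else 0) * (if ν = c.succ then f t else 0)) x

lemma eps_mul_mul_curl_eq_zero (a b c : Fin 3) (μ ν : Fin 4) (x : Fin 4 → ℝ) :
    eps a b c * (eta μ * diagonalAnsatz f b μ x) *
      (pd μ (diagonalAnsatz f c ν) x - pd ν (diagonalAnsatz f c μ) x) = 0 := by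
  by_cases hμ : μ = 0
  · simp [hμ, time_eq_zero]
  by_cases hν : ν = 0
  · subst hν
    by_cases hbc : b = c
    · simp [hbc, eps_self_right]
    have hvanish : diagonalAnsatz f b μ x * diagonalAnsatz (deriv f) c μ x = 0 := by
      unfold diagonalAnsatz
      split_ifs with hb hc
      · exact absurd (Fin.succ_injective _ (hb.symm.trans hc)) hbc
      all_goals simp
    rw [pd_space f hμ, Pi.zero_apply, pd_time]
    linear_combination (-(eps a b c * eta μ)) * hvanish
  · simp [pd_space f hμ, pd_space f hν]

lemma minkowski_square (b d : Fin 3) (x : Fin 4 → ℝ) :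
    ∑ μ : Fin 4, eta μ * diagonalAnsatz f b μ x * diagonalAnsatz f d μ x =
      if b = d then -f (x 0) ^ 2 else 0 := by
  simp [eta, diagonalAnsatz, eq_comm, sq]

lemma cubic_term (a : Fin 3) (ν : Fin 4) (x : Fin 4 → ℝ) :
    ∑ b : Fin 3, ∑ c : Fin 3, ∑ d : Fin 3, ∑ e : Fin 3, ∑ μ : Fin 4,
        eps a b c * eps c d e * (eta μ * diagonalAnsatz f b μ x) * diagonalAnsatz f d μ x *
          diagonalAnsatz f e ν x =
      2 * f (x 0) ^ 2 * diagonalAnsatz f a ν x := by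
  calc _ = ∑ b : Fin 3, ∑ c : Fin 3, ∑ d : Fin 3, ∑ e : Fin 3, eps a b c * eps c d e *
        (∑ μ : Fin 4, eta μ * diagonalAnsatz f b μ x * diagonalAnsatz f d μ x) *
          diagonalAnsatz f e ν x := by
        simp only [Finset.mul_sum, Finset.sum_mul, mul_assoc]
    _ = ∑ b : Fin 3, ∑ c : Fin 3, ∑ e : Fin 3, eps a b c * eps c b e * (-f (x 0) ^ 2) *
          diagonalAnsatz f e ν x := by
        refine Finset.sum_congr rfl fun b _ => Finset.sum_congr rfl fun c _ => ?_
        rw [Fintype.sum_eq_single b fun d hd => by simp [minkowski_square, Ne.symm hd]]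
        simp [minkowski_square]
    _ = _ := by
        rcases Fin.eq_zero_or_eq_succ ν with rfl | ⟨k, rfl⟩
        · simp [time_eq_zero]
        · simp only [diagonalAnsatz, Fin.succ_inj, mul_ite, mul_zero, Finset.sum_ite_eq,
            Finset.mem_univ, if_true]
          simp only [← Finset.sum_mul, sum_eps_mul_eps_swap]
          rcases eq_or_ne a k with rfl | hak
          · simp only [if_true]; ring
          · simp [hak, Ne.symm hak]

theorem isYMSolution {g : ℝ} {f : ℝ → ℝ}
    (hf : ∀ t, deriv (deriv f) t = -2 * g ^ 2 * f t ^ 3) : IsYMSolution g (diagonalAnsatz f) := by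
  intro a ν x
  rw [dalembertian, divergence_eq_zero, pd_const, cubic_term]
  simp only [eps_mul_mul_curl_eq_zero, pd_mul_eq_zero, mul_zero, Finset.sum_const_zero]
  unfold diagonalAnsatz
  split_ifs
  · rw [hf]; ring
  · ring

end diagonalAnsatz

lemma deriv_deriv_mul_comp_affine {y yd : ℝ → ℝ} (hy : ∀ u, HasDerivAt y (yd u) u)
    (hyd : ∀ u, HasDerivAt yd (-2 * y u ^ 3) u) {c k g : ℝ} (hck : c * k ^ 2 = g ^ 2 * c ^ 3)
    (θ t : ℝ) :
    deriv (deriv fun t => c * y (k * t + θ)) t = -2 * g ^ 2 * (c * y (k * t + θ)) ^ 3 := by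
  have hlin (t : ℝ) : HasDerivAt (fun t => k * t + θ) k t := by
    simpa using ((hasDerivAt_id t).const_mul k).add_const θ
  have hfirst : deriv (fun t => c * y (k * t + θ)) = fun t => c * k * yd (k * t + θ) :=
    funext fun t => (((hy _).comp t (hlin t)).const_mul c).deriv.trans (by ring)
  rw [hfirst]
  exact (((hyd _).comp t (hlin t)).const_mul (c * k)).deriv.trans
    (by linear_combination (-2 * y (k * t + θ) ^ 3) * hck)

theorem elliptic_wave_solves_yang_mills_general
    (y yd : ℝ → ℝ)
    (hy : ∀ u : ℝ, HasDerivAt y (yd u) u)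
    (hyd : ∀ u : ℝ, HasDerivAt yd (-2 * y u ^ 3) u)
    (g μ θ : ℝ) (hg : 0 < g)
    (A : Fin 3 → Fin 4 → (Fin 4 → ℝ) → ℝ)
    (hA : A = fun a ν x =>
      if ν.val = a.val + 1 then μ / Real.sqrt g * y (Real.sqrt g * μ * x 0 + θ) else 0) :
    IsYMSolution g A := by
  have hscale : μ / √g * (√g * μ) ^ 2 = g ^ 2 * (μ / √g) ^ 3 := by
    have hs : √g ≠ 0 := (Real.sqrt_pos.mpr hg).ne'
    field_simp
    linear_combination μ ^ 3 * (√g ^ 2 + g) * Real.sq_sqrt hg.le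
  have hA_eq : A = diagonalAnsatz fun t => μ / √g * y (√g * μ * t + θ) := by
    subst hA
    funext a ν x
    simp [diagonalAnsatz, Fin.ext_iff]
  rw [hA_eq]
  exact diagonalAnsatz.isYMSolution (deriv_deriv_mul_comp_affine hy hyd hscale θ)

/-- The elliptic massive wave solving Yang–Mills theory in the infrared:
with `y` the unique maximal solution of `y'' = -2y³`, `y(0) = 0`, `y'(0) = 1`
(the Jacobi elliptic function `sn(·, i)`), the field `A^a_0 = 0`,
`A^a_i = δ^a_i μ g^{-1/2} y(g^{1/2} μ x₀ + θ)` is an exact solution of the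
sourceless classical SU(2) Yang–Mills equations. -/
theorem elliptic_wave_solves_yang_mills
    (y yd : ℝ → ℝ)
    (hy : ∀ u : ℝ, HasDerivAt y (yd u) u)
    (hyd : ∀ u : ℝ, HasDerivAt yd (-2 * y u ^ 3) u)
    (hy0 : y 0 = 0) (hyd0 : yd 0 = 1)
    (g μ θ : ℝ) (hg : 0 < g) (hμ : 0 < μ)
    (A : Fin 3 → Fin 4 → (Fin 4 → ℝ) → ℝ)
    (hA : A = fun a ν x =>
      if ν.val = a.val + 1 then μ / Real.sqrt g * y (Real.sqrt g * μ * x 0 + θ) else 0) :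
    IsYMSolution g A :=
  elliptic_wave_solves_yang_mills_general y yd hy hyd g μ θ hg A hA
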